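/- Let u₀ : ℝ → ℝ be continuous, strictly positive, and periodic with period 1, let J₀ be a real constant, and let r : ℝ × [0,∞) → ℝ be such that r(·,t) is twice continuously differentiable, r(x,·) is continuously differentiable, all partial derivatives ∂ₜr, ∂ₓr, ∂ₓₓr are jointly continuous, r(x+1,t) = r(x,t) for all x and t, and u₀(x)·∂ₜr(x,t) = ∂ₓ(−J₀·r(x,t) + u₀(x)·∂ₓr(x,t)) for all x and t. Then for every t ≥ 0, d/dt ∫₀¹ u₀(x)·r(x,t)² dx = −2 ∫₀¹ u₀(x)·(∂ₓr(x,t))² dx ≤ 0; in particular the function t ↦ ∫₀¹ u₀(x)·r(x,t)² dx is non-increasing. -/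

import Mathlib

open MeasureTheory intervalIntegral Set Function

/-!
Differentiating under the integral sign and substituting the equation,
`d/dt ∫₀¹ u₀ r² = 2 ∫₀¹ r (−J₀ r + u₀ ∂ₓr)'`. Integrating by parts over one period, the
boundary terms cancel by periodicity and `∫₀¹ r ∂ₓr = 0`, leaving `−2 ∫₀¹ u₀ (∂ₓr)² ≤ 0`.
-/

/-- `F x τ` for `τ ≥ t₀`, continued to `τ < t₀` with the constant slope `F' x t₀`, so that
differentiation under the integral sign, which needs two-sided derivatives, applies at `t₀`. -/
noncomputable def extendIci (F F' : ℝ → ℝ → ℝ) (t₀ x τ : ℝ) : ℝ :=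
  F x t₀ + ∫ s in t₀..τ, F' x (max s t₀)

section ExtendIci

variable {F F' : ℝ → ℝ → ℝ} {t₀ : ℝ}

lemma continuous_apply_max_of_continuousOn
    (hF' : ContinuousOn (uncurry F') {p : ℝ × ℝ | t₀ ≤ p.2}) :
    Continuous (uncurry fun x s => F' x (max s t₀)) :=
  hF'.comp_continuous (f := fun p : ℝ × ℝ => (p.1, max p.2 t₀)) (by fun_prop)
    fun p => show t₀ ≤ max p.2 t₀ from le_max_right _ _

lemma hasDerivAt_extendIci (hF' : ContinuousOn (uncurry F') {p : ℝ × ℝ | t₀ ≤ p.2})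
    (x τ : ℝ) : HasDerivAt (extendIci F F' t₀ x) (F' x (max τ t₀)) τ :=
  ((continuous_apply_max_of_continuousOn hF').uncurry_left x
    |>.integral_hasStrictDerivAt t₀ τ).hasDerivAt.const_add _

lemma continuous_extendIci (hF₀ : Continuous fun x => F x t₀)
    (hF' : ContinuousOn (uncurry F') {p : ℝ × ℝ | t₀ ≤ p.2}) :
    Continuous (uncurry (extendIci F F' t₀)) :=
  (hF₀.comp continuous_fst).add
    (continuous_parametric_primitive_of_continuous (continuous_apply_max_of_continuousOn hF'))

lemma extendIci_eq (hF : ∀ x, ∀ t ∈ Ici t₀, HasDerivWithinAt (F x) (F' x t) (Ici t₀) t)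
    (hF' : ContinuousOn (uncurry F') {p : ℝ × ℝ | t₀ ≤ p.2}) {x τ : ℝ} (hτ : t₀ ≤ τ) :
    extendIci F F' t₀ x τ = F x τ := by
  have hslope : Continuous fun s => F' x (max s t₀) :=
    (continuous_apply_max_of_continuousOn hF').uncurry_left x
  have hFTC : ∫ s in t₀..τ, F' x (max s t₀) = F x τ - F x t₀ := by
    refine integral_eq_sub_of_hasDeriv_right_of_le hτ
      (fun s hs => (hF x s hs.1).continuousWithinAt.mono Icc_subset_Ici_self)
      (fun s hs => ?_) (hslope.intervalIntegrable _ _)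
    rw [max_eq_left hs.1.le]
    exact ((hF x s hs.1.le).hasDerivAt (Ici_mem_nhds hs.1)).hasDerivWithinAt
  rw [extendIci, hFTC]
  ring

lemma continuousOn_uncurry_of_hasDerivWithinAt_Ici
    (hF : ∀ x, ∀ t ∈ Ici t₀, HasDerivWithinAt (F x) (F' x t) (Ici t₀) t)
    (hF' : ContinuousOn (uncurry F') {p : ℝ × ℝ | t₀ ≤ p.2})
    (hF₀ : Continuous fun x => F x t₀) :
    ContinuousOn (uncurry F) {p : ℝ × ℝ | t₀ ≤ p.2} :=
  (continuous_extendIci hF₀ hF').continuousOn.congr fun _ hp => (extendIci_eq hF hF' hp).symm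

end ExtendIci

section ParametricIntegral

variable {F F' : ℝ → ℝ → ℝ}

lemma hasDerivAt_intervalIntegral_of_continuous (hF : ∀ x τ, HasDerivAt (F x) (F' x τ) τ)
    (hF' : Continuous (uncurry F')) (hFc : ∀ τ, Continuous fun x => F x τ) (a b t : ℝ) :
    HasDerivAt (fun τ => ∫ x in a..b, F x τ) (∫ x in a..b, F' x t) t := by
  obtain ⟨C, hC⟩ : ∃ C, ∀ p ∈ uIcc a b ×ˢ Metric.closedBall t 1, ‖F' p.1 p.2‖ ≤ C :=
    (isCompact_uIcc.prod (isCompact_closedBall t 1)).exists_bound_of_continuousOn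
      hF'.continuousOn
  refine (hasDerivAt_integral_of_dominated_loc_of_deriv_le (bound := fun _ => C)
    (Metric.ball_mem_nhds t one_pos) (.of_forall fun τ => (hFc τ).aestronglyMeasurable)
    ((hFc t).intervalIntegrable a b) (hF'.uncurry_right t).aestronglyMeasurable
    (.of_forall fun x hx τ hτ =>
      hC (x, τ) ⟨uIoc_subset_uIcc hx, Metric.ball_subset_closedBall hτ⟩)
    intervalIntegrable_const (.of_forall fun x _ τ _ => hF x τ)).2

lemma hasDerivWithinAt_intervalIntegral_Ici {t₀ : ℝ}
    (hF : ∀ x, ∀ t ∈ Ici t₀, HasDerivWithinAt (F x) (F' x t) (Ici t₀) t)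
    (hF' : ContinuousOn (uncurry F') {p : ℝ × ℝ | t₀ ≤ p.2})
    (hF₀ : Continuous fun x => F x t₀) (a b : ℝ) {t : ℝ} (ht : t₀ ≤ t) :
    HasDerivWithinAt (fun τ => ∫ x in a..b, F x τ) (∫ x in a..b, F' x t) (Ici t₀) t := by
  have hext := hasDerivAt_intervalIntegral_of_continuous (hasDerivAt_extendIci hF')
    (continuous_apply_max_of_continuousOn hF')
    (fun τ => (continuous_extendIci hF₀ hF').uncurry_right τ) a b t
  rw [max_eq_left ht] at hext
  exact hext.hasDerivWithinAt.congr_of_mem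
    (fun τ hτ => integral_congr fun x _ => (extendIci_eq hF hF' hτ).symm) ht

end ParametricIntegral

section Periodic

variable {f g f' g' : ℝ → ℝ} {a c : ℝ}

lemma Function.Periodic.deriv (hf : Periodic f c) : Periodic (deriv f) c := fun x => by
  rw [← deriv_comp_add_const, show (fun y => f (y + c)) = f from funext hf]

lemma integral_mul_deriv_eq_neg_of_periodic (hf : ∀ x, HasDerivAt f (f' x) x)
    (hg : ∀ x, HasDerivAt g (g' x) x) (hf' : IntervalIntegrable f' volume a (a + c))
    (hg' : IntervalIntegrable g' volume a (a + c)) (hfc : Periodic f c) (hgc : Periodic g c) :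
    ∫ x in a..a + c, f x * g' x = -∫ x in a..a + c, f' x * g x := by
  rw [integral_mul_deriv_eq_deriv_mul (fun x _ => hf x) (fun x _ => hg x) hf' hg', hfc, hgc]
  ring

lemma integral_mul_deriv_flux_eq_of_periodic {ρ u L : ℝ → ℝ} {J : ℝ} (hρ : ContDiff ℝ 1 ρ)
    (hu : Continuous u) (hρc : Periodic ρ c) (huc : Periodic u c)
    (hL : ∀ x, HasDerivAt (fun y => -J * ρ y + u y * deriv ρ y) (L x) x)
    (hLi : IntervalIntegrable L volume a (a + c)) :
    ∫ x in a..a + c, ρ x * L x = -∫ x in a..a + c, u x * deriv ρ x ^ 2 := by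
  have hρ' : ∀ x, HasDerivAt ρ (deriv ρ x) x :=
    fun x => (hρ.differentiable one_ne_zero x).hasDerivAt
  have hρ'c : Continuous (deriv ρ) := hρ.continuous_deriv le_rfl
  have hflux : Periodic (fun y => -J * ρ y + u y * deriv ρ y) c := fun x => by
    simp only [hρc x, huc x, hρc.deriv x]
  have hρρ' : ∫ x in a..a + c, deriv ρ x * ρ x = 0 := by
    have := integral_mul_deriv_eq_neg_of_periodic (a := a) hρ' hρ' (hρ'c.intervalIntegrable _ _)
      (hρ'c.intervalIntegrable _ _) hρc hρc
    simp only [mul_comm (ρ _)] at this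
    linarith
  rw [integral_mul_deriv_eq_neg_of_periodic hρ' hL (hρ'c.intervalIntegrable _ _) hLi hρc hflux]
  have hexpand : ∀ x, deriv ρ x * (-J * ρ x + u x * deriv ρ x)
      = -J * (deriv ρ x * ρ x) + u x * deriv ρ x ^ 2 := fun x => by ring
  simp only [hexpand]
  rw [intervalIntegral.integral_add
    ((by fun_prop : Continuous fun x => -J * (deriv ρ x * ρ x)).intervalIntegrable _ _)
    ((by fun_prop : Continuous fun x => u x * deriv ρ x ^ 2).intervalIntegrable _ _),
    intervalIntegral.integral_const_mul, hρρ']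
  ring

end Periodic

theorem stmt_5 (u0 : ℝ → ℝ) (hu0c : Continuous u0) (hu0pos : ∀ x, 0 < u0 x)
    (hu0per : ∀ x, u0 (x + 1) = u0 x) (J0 : ℝ) (r : ℝ → ℝ → ℝ)
    (hrx : ∀ t, 0 ≤ t → ContDiff ℝ 2 (fun x => r x t))
    (hrt : ∀ x, ContDiffOn ℝ 1 (r x) (Set.Ici 0))
    (hdt_cont : ContinuousOn (fun p : ℝ × ℝ => derivWithin (r p.1) (Set.Ici 0) p.2)
      {p : ℝ × ℝ | 0 ≤ p.2})
    (hper : ∀ x t, 0 ≤ t → r (x + 1) t = r x t)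
    (hpde : ∀ x t, 0 ≤ t → HasDerivAt
      (fun y => -J0 * r y t + u0 y * deriv (fun z => r z t) y)
      (u0 x * derivWithin (r x) (Set.Ici 0) t) x) :
    (∀ t, 0 ≤ t →
      HasDerivWithinAt (fun τ => ∫ x in (0:ℝ)..1, u0 x * (r x τ) ^ 2)
        (-2 * ∫ x in (0:ℝ)..1, u0 x * (deriv (fun y => r y t) x) ^ 2)
        (Set.Ici 0) t ∧
      (-2 * ∫ x in (0:ℝ)..1, u0 x * (deriv (fun y => r y t) x) ^ 2) ≤ 0) ∧
    AntitoneOn (fun t => ∫ x in (0:ℝ)..1, u0 x * (r x t) ^ 2) (Set.Ici 0) := by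
  have hr : ∀ x, ∀ t ∈ Ici (0:ℝ),
      HasDerivWithinAt (r x) (derivWithin (r x) (Ici 0) t) (Ici 0) t :=
    fun x t ht => ((hrt x).differentiableOn one_ne_zero t ht).hasDerivWithinAt
  have hr_cont :=
    continuousOn_uncurry_of_hasDerivWithinAt_Ici hr hdt_cont (hrx 0 le_rfl).continuous
  have hdissipation : ∀ t, 0 ≤ t →
      ∫ x in (0:ℝ)..1, 2 * (r x t * (u0 x * derivWithin (r x) (Ici 0) t))
        = -2 * ∫ x in (0:ℝ)..1, u0 x * (deriv (fun y => r y t) x) ^ 2 := fun t ht => by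
    have hdt_slice : Continuous fun x => derivWithin (r x) (Ici 0) t :=
      hdt_cont.comp_continuous (f := fun x => (x, t)) (by fun_prop) fun _ => show 0 ≤ t from ht
    have := integral_mul_deriv_flux_eq_of_periodic (a := 0) (c := 1)
      ((hrx t ht).of_le one_le_two) hu0c (hper · t ht) hu0per (hpde · t ht)
      ((hu0c.mul hdt_slice).intervalIntegrable _ _)
    rw [zero_add] at this
    rw [intervalIntegral.integral_const_mul, this, neg_mul_comm]
  have hF'_cont : ContinuousOn
      (uncurry fun x τ => 2 * (r x τ * (u0 x * derivWithin (r x) (Ici 0) τ)))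
      {p : ℝ × ℝ | 0 ≤ p.2} :=
    continuousOn_const.mul (hr_cont.mul ((hu0c.comp continuous_fst).continuousOn.mul hdt_cont))
  have hderiv : ∀ t, 0 ≤ t → HasDerivWithinAt (fun τ => ∫ x in (0:ℝ)..1, u0 x * (r x τ) ^ 2)
      (-2 * ∫ x in (0:ℝ)..1, u0 x * (deriv (fun y => r y t) x) ^ 2) (Ici 0) t := fun t ht =>
    hdissipation t ht ▸ hasDerivWithinAt_intervalIntegral_Ici (F := fun x τ => u0 x * r x τ ^ 2)
      (F' := fun x τ => 2 * (r x τ * (u0 x * derivWithin (r x) (Ici 0) τ)))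
      (fun x t ht => (((hr x t ht).pow 2).const_mul (u0 x)).congr_deriv (by ring))
      hF'_cont (hu0c.mul ((hrx 0 le_rfl).continuous.pow 2)) 0 1 ht
  have hnonpos : ∀ t, -2 * ∫ x in (0:ℝ)..1, u0 x * (deriv (fun y => r y t) x) ^ 2 ≤ 0 := fun t =>
    mul_nonpos_of_nonpos_of_nonneg (by norm_num) <| intervalIntegral.integral_nonneg zero_le_one
      fun x _ => mul_nonneg (hu0pos x).le (sq_nonneg _)
  exact ⟨fun t ht => ⟨hderiv t ht, hnonpos t⟩,
    antitoneOn_of_hasDerivWithinAt_nonpos (convex_Ici 0)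
      (fun t ht => (hderiv t ht).continuousWithinAt)
      (fun t ht => (hderiv t (interior_subset ht)).mono interior_subset) fun t _ => hnonpos t⟩
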